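/- If f lies on interval [u,v] of the shortest s–t path and d(s,u) + d(u,t ∣ avoid f) > d(s,v ∣ avoid f) + d(v,t), then the shortest s-to-v path avoiding f does not pass through u. -/

import Mathlib

/-!
If `u` lay on `Q`, splitting `Q` at `u` would give `d(s,u) + d(u,v ∣ avoid f) ≤ d(s,v ∣ avoid f)`.
A unique shortest path repeats no vertex (cutting out a cycle would give a second shortest
path), so the `v`–`t` tail of `P` avoids `f`, whence `d(v,t ∣ avoid f) ≤ d(v,t)`. The triangle
inequality through `v` then gives `d(u,t ∣ avoid f) ≤ d(u,v ∣ avoid f) + d(v,t)`, and adding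
the two inequalities contradicts the hypothesis.
-/

open scoped ENNReal

/-- Cost of a walk, given as a list of vertices, in a weighted digraph:
the sum of the weights of consecutive pairs.  Non-edges have weight `⊤`. -/
noncomputable def walkCost {V : Type*} (w : V → V → ℝ≥0∞) : List V → ℝ≥0∞
  | [] => 0
  | [_] => 0
  | a :: b :: l => w a b + walkCost w (b :: l)

/-- `p` is a walk from `s` to `t`. -/
def IsWalkFromTo {V : Type*} (s t : V) (p : List V) : Prop :=
  p.head? = some s ∧ p.getLast? = some t

/-- `d(s,t ∣ avoid A)`: the length of the shortest walk from `s` to `t`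
avoiding every vertex of `A` (`⊤` if none exists). -/
noncomputable def dAvoid {V : Type*} (w : V → V → ℝ≥0∞) (s t : V) (A : Set V) : ℝ≥0∞ :=
  ⨅ p ∈ {p : List V | IsWalkFromTo s t p ∧ ∀ x ∈ p, x ∉ A}, walkCost w p

/-- All-pairs unique shortest paths. -/
def UniqueSP {V : Type*} (w : V → V → ℝ≥0∞) : Prop :=
  ∀ a b : V, dAvoid w a b ∅ ≠ ⊤ →
    ∃! p : List V, IsWalkFromTo a b p ∧ walkCost w p = dAvoid w a b ∅

/-- The set of vertices of the path `P` with positions in `[iu, iv]`: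
the interval `[u, v]` on `P`. -/
def intervalSet {V : Type*} (P : List V) (iu iv : ℕ) : Set V :=
  {x | ∃ i : ℕ, iu ≤ i ∧ i ≤ iv ∧ P[i]? = some x}

theorem List.Duplicate.exists_eq_append {α : Type*} {x : α} {l : List α} (h : l.Duplicate x) :
    ∃ A B C, l = A ++ x :: (B ++ x :: C) := by
  induction h with
  | cons_mem hx =>
    obtain ⟨B, C, rfl⟩ := List.append_of_mem hx
    exact ⟨[], B, C, rfl⟩
  | @cons_duplicate y _ _ ih =>
    obtain ⟨A, B, C, rfl⟩ := ih
    exact ⟨y :: A, B, C, rfl⟩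

theorem List.exists_eq_append_cons_of_getElem?_lt {α : Type*} {l : List α} {x y : α} {i j : ℕ}
    (hx : l[i]? = some x) (hy : l[j]? = some y) (hij : i < j) :
    ∃ A B, l = A ++ y :: B ∧ x ∈ A := by
  obtain ⟨hj, rfl⟩ := List.getElem?_eq_some_iff.mp hy
  refine ⟨l.take j, l.drop (j + 1), ?_, List.mem_iff_getElem?.mpr ⟨i, ?_⟩⟩
  · rw [← List.drop_eq_getElem_cons hj, List.take_append_drop]
  · rw [List.getElem?_take, if_pos hij, hx]

section Walks

variable {V : Type*} {w : V → V → ℝ≥0∞}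

theorem walkCost_append_cons (L : List V) (x : V) (M : List V) :
    walkCost w (L ++ x :: M) = walkCost w (L ++ [x]) + walkCost w (x :: M) := by
  induction L using walkCost.induct with
  | case1 => simp [walkCost]
  | case2 => simp [walkCost]
  | case3 a b L ih =>
    simp only [List.cons_append, walkCost] at ih ⊢
    rw [ih, add_assoc]

theorem walkCost_append_cons_le (A B C : List V) (x : V) :
    walkCost w (A ++ x :: C) ≤ walkCost w (A ++ x :: (B ++ x :: C)) := by
  rw [walkCost_append_cons A x C, walkCost_append_cons A x (B ++ x :: C), ← List.cons_append,
    walkCost_append_cons (x :: B) x C]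
  gcongr
  exact le_add_self

theorem isWalkFromTo_append_cons_iff {s t x : V} {L M : List V} :
    IsWalkFromTo s t (L ++ x :: M) ↔ IsWalkFromTo s x (L ++ [x]) ∧ IsWalkFromTo x t (x :: M) := by
  have hhead : (L ++ x :: M).head? = (L ++ [x]).head? := by cases L <;> rfl
  simp [IsWalkFromTo, hhead]

theorem dAvoid_le_walkCost {a b : V} {A : Set V} {p : List V}
    (hp : IsWalkFromTo a b p) (hA : ∀ x ∈ p, x ∉ A) : dAvoid w a b A ≤ walkCost w p :=
  iInf₂_le p ⟨hp, hA⟩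

theorem dAvoid_mono {a b : V} {A B : Set V} (h : A ⊆ B) : dAvoid w a b A ≤ dAvoid w a b B :=
  biInf_mono fun _ hp => ⟨hp.1, fun x hx hxA => hp.2 x hx (h hxA)⟩

theorem dAvoid_triangle (a b c : V) (A : Set V) :
    dAvoid w a c A ≤ dAvoid w a b A + dAvoid w b c A := by
  refine ENNReal.le_iInf₂_add_iInf₂ fun p hp q hq => ?_
  obtain ⟨L, rfl⟩ := List.getLast?_eq_some_iff.mp hp.1.2
  obtain ⟨M, rfl⟩ := List.head?_eq_some_iff.mp hq.1.1
  rw [← walkCost_append_cons]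
  refine dAvoid_le_walkCost (isWalkFromTo_append_cons_iff.mpr ⟨hp.1, hq.1⟩) fun x hx => ?_
  rcases List.mem_append.mp hx with hx | hx
  · exact hp.2 x (List.mem_append_left _ hx)
  · exact hq.2 x hx

theorem dAvoid_add_dAvoid_le_walkCost {a c x : V} {A : Set V} {p : List V}
    (hp : IsWalkFromTo a c p) (hA : ∀ y ∈ p, y ∉ A) (hx : x ∈ p) :
    dAvoid w a x A + dAvoid w x c A ≤ walkCost w p := by
  obtain ⟨L, M, rfl⟩ := List.append_of_mem hx
  obtain ⟨hL, hM⟩ := isWalkFromTo_append_cons_iff.mp hp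
  rw [walkCost_append_cons]
  exact add_le_add (dAvoid_le_walkCost hL fun y hy => hA y (by grind))
    (dAvoid_le_walkCost hM fun y hy => hA y (by grind))

theorem walkCost_le_dAvoid_of_append_cons {s t x : V} {A : Set V} {L M : List V}
    (hp : IsWalkFromTo s t (L ++ x :: M)) (hA : ∀ y ∈ L ++ x :: M, y ∉ A)
    (hcost : walkCost w (L ++ x :: M) = dAvoid w s t A) (hfin : dAvoid w s t A ≠ ⊤) :
    walkCost w (x :: M) ≤ dAvoid w x t A := by
  have hprefix : walkCost w (L ++ [x]) ≠ ⊤ :=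
    ne_top_of_le_ne_top hfin (hcost ▸ walkCost_append_cons L x M ▸ le_self_add)
  refine (ENNReal.add_le_add_iff_left hprefix).mp ?_
  calc walkCost w (L ++ [x]) + walkCost w (x :: M) = dAvoid w s t A := by
        rw [← walkCost_append_cons, hcost]
    _ ≤ dAvoid w s x A + dAvoid w x t A := dAvoid_triangle s x t A
    _ ≤ walkCost w (L ++ [x]) + dAvoid w x t A := by
        gcongr
        exact dAvoid_le_walkCost (isWalkFromTo_append_cons_iff.mp hp).1
          fun y hy => hA y (by grind)

theorem UniqueSP.nodup (husp : UniqueSP w) {s t : V} {P : List V} (hP : IsWalkFromTo s t P)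
    (hcost : walkCost w P = dAvoid w s t ∅) (hfin : dAvoid w s t ∅ ≠ ⊤) : P.Nodup := by
  by_contra hdup
  obtain ⟨x, hx⟩ := List.exists_duplicate_iff_not_nodup.mpr hdup
  obtain ⟨A, B, C, rfl⟩ := hx.exists_eq_append
  obtain ⟨hA, hBC⟩ := isWalkFromTo_append_cons_iff.mp hP
  rw [← List.cons_append] at hBC
  have hcut : IsWalkFromTo s t (A ++ x :: C) :=
    isWalkFromTo_append_cons_iff.mpr ⟨hA, (isWalkFromTo_append_cons_iff.mp hBC).2⟩
  have hcut_cost : walkCost w (A ++ x :: C) = dAvoid w s t ∅ :=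
    le_antisymm (hcost ▸ walkCost_append_cons_le A B C x) (dAvoid_le_walkCost hcut (by simp))
  obtain ⟨R, -, hR⟩ := husp s t hfin
  have := congrArg List.length ((hR _ ⟨hcut, hcut_cost⟩).trans (hR _ ⟨hP, hcost⟩).symm)
  simp only [List.length_append, List.length_cons] at this
  omega

end Walks

theorem shortest_path_skips_u_general {V : Type*} (w : V → V → ℝ≥0∞)
    (husp : UniqueSP w)
    (s t u v f : V) (P : List V)
    (hP : IsWalkFromTo s t P) (hPcost : walkCost w P = dAvoid w s t ∅)
    (iv ifi : ℕ)
    (hv : P[iv]? = some v) (hf : P[ifi]? = some f)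
    (hfv : ifi ≤ iv)
    (hgt : dAvoid w s u ∅ + dAvoid w u t {f} > dAvoid w s v {f} + dAvoid w v t ∅)
    (Q : List V) (hQ : IsWalkFromTo s v Q) (hfQ : f ∉ Q)
    (hQcost : walkCost w Q = dAvoid w s v {f}) :
    u ∉ Q := by
  intro huQ
  have hQf : ∀ x ∈ Q, x ∉ ({f} : Set V) := fun x hx (hxf : x = f) => hfQ (hxf ▸ hx)
  obtain ⟨hsv, hvt⟩ := ENNReal.add_ne_top.mp hgt.ne_top
  have hst : dAvoid w s t ∅ ≠ ⊤ := ne_top_of_le_ne_top (ENNReal.add_ne_top.mpr ⟨hsv, hvt⟩)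
    ((dAvoid_triangle s v t ∅).trans (by gcongr; exact dAvoid_mono (Set.empty_subset _)))
  have hfv' : f ≠ v := fun h => hfQ (h ▸ List.mem_of_getLast? hQ.2)
  have hfiv : ifi < iv := hfv.lt_of_ne <| by
    rintro rfl
    exact hfv' (Option.some_injective _ (hf.symm.trans hv))
  obtain ⟨A, B, rfl, hfA⟩ := List.exists_eq_append_cons_of_getElem?_lt hf hv hfiv
  have hfB : ∀ x ∈ v :: B, x ∉ ({f} : Set V) := fun x hx (hxf : x = f) =>
    List.disjoint_of_nodup_append (husp.nodup hP hPcost hst) hfA (hxf ▸ hx)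
  have hvt_avoid : dAvoid w v t {f} ≤ dAvoid w v t ∅ :=
    (dAvoid_le_walkCost (isWalkFromTo_append_cons_iff.mp hP).2 hfB).trans
      (walkCost_le_dAvoid_of_append_cons hP (by simp) hPcost hst)
  have hut : dAvoid w u t {f} ≤ dAvoid w u v {f} + dAvoid w v t ∅ :=
    (dAvoid_triangle u v t {f}).trans (by gcongr)
  have hsu : dAvoid w s u ∅ + dAvoid w u v {f} ≤ dAvoid w s v {f} :=
    hQcost ▸ (add_le_add_left (dAvoid_mono (Set.empty_subset _)) _).trans
      (dAvoid_add_dAvoid_le_walkCost hQ hQf huQ)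
  refine hgt.not_ge ?_
  calc dAvoid w s u ∅ + dAvoid w u t {f}
      ≤ dAvoid w s u ∅ + (dAvoid w u v {f} + dAvoid w v t ∅) := by gcongr
    _ ≤ dAvoid w s v {f} + dAvoid w v t ∅ := by rw [← add_assoc]; gcongr

/-- **Skipping lemma.**  If `f` lies on the interval `[u,v]` of the unique shortest
`s`–`t` path and `d(s,u) + d(u,t ∣ avoid f) > d(s,v ∣ avoid f) + d(v,t)`, then the
shortest `s`-to-`v` path avoiding `f` does not pass through `u`. -/
theorem shortest_path_skips_u {V : Type*} (w : V → V → ℝ≥0∞)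
    (husp : UniqueSP w)
    (s t u v f : V) (P : List V)
    (hP : IsWalkFromTo s t P) (hPcost : walkCost w P = dAvoid w s t ∅)
    (iu iv ifi : ℕ)
    (hu : P[iu]? = some u) (hv : P[iv]? = some v) (hf : P[ifi]? = some f)
    (huf : iu ≤ ifi) (hfv : ifi ≤ iv)
    (hfs : f ≠ s) (hft : f ≠ t)
    (hgt : dAvoid w s u ∅ + dAvoid w u t {f} > dAvoid w s v {f} + dAvoid w v t ∅)
    (Q : List V) (hQ : IsWalkFromTo s v Q) (hfQ : f ∉ Q)
    (hQcost : walkCost w Q = dAvoid w s v {f}) :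
    u ∉ Q :=
  shortest_path_skips_u_general w husp s t u v f P hP hPcost iv ifi hv hf hfv hgt Q hQ hfQ hQcost
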